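/- Let m, n ≥ 0. Then Q^{(1^m)}·P^{(n)} = Σ_{k=0}^{min(m,n)} P^{(n−k)}·Q^{(1^{m−k})} in A. (This is the case ⟨i,j⟩ = −1 of the additional mixed relations stated after Lemma 1, for two adjacent nodes of the Dynkin diagram.) -/

import Mathlib

/-- The quantum integer `[n] = (q^n - q^{-n})/(q - q^{-1})` in `K = ℚ(q)`,
where `q` is the variable `RatFunc.X`. -/
noncomputable def qint (n : ℤ) : RatFunc ℚ :=
  (RatFunc.X ^ n - RatFunc.X ^ (-n)) / (RatFunc.X - RatFunc.X⁻¹)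

/-! Commuting `a_r` past `P^{(n)}` leaves the single correction `c_r P^{(n-r)}`, where
`c_r = β_r γ_r / r` for the coefficient `β_r = r/[r]` of the recursion of `P` and the commutator
`γ_r = (-1)^{r+1}[r]^2/r`; this follows by induction on `n` from the recursion of `P`.
Inducting on `m` through the recursion of `Q^{(1^m)}`, whose coefficient `α_r` satisfies
`α_r c_r = 1`, the main terms give `Σ_k (m - k) P^{(n-k)} Q^{(1^{m-k})}` and the corrections give
`Σ_k k P^{(n-k)} Q^{(1^{m-k})}`, which add up to `m` times the claimed sum. -/

open Finset

namespace RatFunc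

lemma X_pow_ne_one {k : ℕ} (hk : k ≠ 0) : (X : RatFunc ℚ) ^ k ≠ 1 := by
  rw [← algebraMap_X, ← map_pow, ← map_one (algebraMap (Polynomial ℚ) _),
    (algebraMap_injective ℚ).ne_iff]
  exact fun h => hk (by simpa using congrArg Polynomial.natDegree h)

lemma X_pow_sub_inv_ne_zero {k : ℕ} (hk : k ≠ 0) : (X : RatFunc ℚ) ^ k - (X ^ k)⁻¹ ≠ 0 := by
  rw [sub_ne_zero, ne_eq, ← mul_eq_one_iff_eq_inv₀ (pow_ne_zero k X_ne_zero), ← pow_add]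
  exact X_pow_ne_one (by omega)

end RatFunc

lemma qint_ne_zero {n : ℕ} (hn : n ≠ 0) : qint n ≠ 0 := by
  rw [qint, zpow_neg, zpow_natCast]
  exact div_ne_zero (RatFunc.X_pow_sub_inv_ne_zero hn)
    (by simpa using RatFunc.X_pow_sub_inv_ne_zero one_ne_zero)

lemma sum_Icc_sum_range_add_eq_sum_nsmul {M : Type*} [AddCommMonoid M] {f : ℕ → M} {m n : ℕ}
    (hfm : ∀ j, m < j → f j = 0) (hfn : ∀ j, n < j → f j = 0) :
    ∑ r ∈ Icc 1 m, ∑ k ∈ range (n + 1), f (k + r) = ∑ j ∈ range (n + 1), j • f j := by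
  calc ∑ r ∈ Icc 1 m, ∑ k ∈ range (n + 1), f (k + r)
      = ∑ r ∈ Icc 1 m, ∑ j ∈ Ico r (n + 1), f j := by
        refine sum_congr rfl fun r hr => ?_
        rw [sum_Ico_eq_sum_range]
        refine (sum_subset (range_subset_range.mpr (by omega)) fun k hk hk' => ?_).symm.trans
          (sum_congr rfl fun k _ => by rw [add_comm])
        simp only [mem_range, mem_Icc] at hk hk' hr
        exact hfn _ (by omega)
    _ = ∑ j ∈ range (n + 1), ∑ r ∈ Icc 1 (min j m), f j :=
        sum_comm' fun r j => by simp only [mem_Icc, mem_Ico, mem_range]; omega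
    _ = ∑ j ∈ range (n + 1), j • f j := by
        refine sum_congr rfl fun j _ => ?_
        rw [sum_const, Nat.card_Icc]
        rcases le_or_gt j m with h | h
        · rw [min_eq_left h, Nat.add_sub_cancel]
        · rw [hfm j h, smul_zero, smul_zero]

lemma smul_eq_sum_Icc_of_le {K A : Type*} [Ring K] [Ring A] [Module K A]
    {c : ℕ → K} {x : ℕ → A} {R : ℤ → A} (hneg : ∀ k : ℤ, k < 0 → R k = 0)
    (hrec : ∀ n : ℕ, 1 ≤ n → (n : K) • R n = ∑ s ∈ Icc 1 n, c s • (x s * R (n - s)))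
    {j : ℤ} {M : ℕ} (hjM : j ≤ M) :
    (j : K) • R j = ∑ s ∈ Icc 1 M, c s • (x s * R (j - s)) := by
  rcases lt_or_ge j 1 with hj | hj
  · have hlhs : (j : K) • R j = 0 := by
      obtain hj | rfl : j < 0 ∨ j = 0 := by omega
      · rw [hneg j hj, smul_zero]
      · rw [Int.cast_zero, zero_smul]
    rw [hlhs, eq_comm]
    exact sum_eq_zero fun s hs => by
      rw [hneg _ (by simp only [mem_Icc] at hs; omega), mul_zero, smul_zero]
  · lift j to ℕ using (by omega)
    rw [Int.cast_natCast, hrec j (by omega)]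
    refine sum_subset (Icc_subset_Icc_right (by omega)) fun s hs hs' => ?_
    simp only [mem_Icc] at hs hs'
    rw [hneg _ (by omega), mul_zero, smul_zero]

section

variable {K A : Type*} [Field K] [CharZero K] [Ring A] [Algebra K A]

lemma mul_eq_mul_add_smul_of_sub_eq_ite {β : ℕ → K} {b : ℕ → A} {P : ℤ → A} (hP0 : P 0 = 1)
    (hPneg : ∀ k : ℤ, k < 0 → P k = 0)
    (hPrec : ∀ n : ℕ, 1 ≤ n → (n : K) • P n = ∑ s ∈ Icc 1 n, β s • (b s * P (n - s)))
    {x : A} {r : ℕ} (hr : 1 ≤ r) {γ : K}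
    (hx : ∀ s : ℕ, 1 ≤ s → x * b s - b s * x = if r = s then γ • (1 : A) else 0) (j : ℤ) :
    x * P j = P j * x + (β r * γ / r) • P (j - r) := by
  set d := β r * γ / r
  induction j using Int.strongRec (m := 1) with
  | lt j hj =>
    obtain hj | rfl : j < 0 ∨ j = 0 := by omega
    · rw [hPneg j hj, hPneg _ (by omega)]; simp
    · rw [hP0, hPneg _ (by omega)]; simp
  | ge j hj ih =>
    have hj0 : (j : K) ≠ 0 := by exact_mod_cast (show j ≠ 0 by omega)
    refine smul_right_injective A hj0 ?_
    -- With the common bound `j + r` the recursions of `P j` and `P (j - r)` run over the same `s`,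
    -- and `s = r` is among them.
    have hterm : ∀ s ∈ Icc 1 (j.toNat + r), β s • (x * (b s * P (j - s))) =
        β s • (b s * P (j - s)) * x + d • (β s • (b s * P (j - r - s)))
          + if r = s then (β r * γ) • P (j - r) else 0 := by
      intro s hs
      have hs1 : 1 ≤ s := (mem_Icc.mp hs).1
      rw [← mul_assoc, ← sub_add_cancel (x * b s) (b s * x), hx s hs1, add_mul, mul_assoc,
        ih _ (by omega), sub_right_comm]
      split_ifs with hrs
      · subst hrs; simp [mul_add, smul_add, smul_smul, mul_comm, add_comm, mul_assoc]
      · simp [mul_add, smul_add, smul_smul, mul_comm, mul_assoc]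
    have hrec := smul_eq_sum_Icc_of_le hPneg hPrec (j := j) (M := j.toNat + r) (by omega)
    have hrec' := smul_eq_sum_Icc_of_le hPneg hPrec (j := j - r) (M := j.toNat + r) (by omega)
    calc (j : K) • (x * P j) = x * ((j : K) • P j) := (mul_smul_comm _ _ _).symm
      _ = ((j : K) • P j) * x + d • (((j - r : ℤ) : K) • P (j - r)) + (β r * γ) • P (j - r) := by
        rw [hrec, hrec', mul_sum, sum_mul, smul_sum]
        simp only [mul_smul_comm]
        rw [sum_congr rfl hterm, sum_add_distrib, sum_add_distrib, sum_ite_eq,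
          if_pos (mem_Icc.mpr ⟨hr, by omega⟩)]
      _ = (j : K) • (P j * x + d • P (j - r)) := by
        rw [smul_add, smul_smul, smul_smul, smul_mul_assoc, add_assoc, ← add_smul]
        congr 2
        have hr0 : (r : K) ≠ 0 := by exact_mod_cast (show r ≠ 0 by omega)
        simp only [d]; push_cast; field_simp; ring

lemma mul_eq_sum_range_of_mul_eq_mul_add_smul {α c : ℕ → K} {a : ℕ → A} {P Q : ℤ → A}
    (hPneg : ∀ k : ℤ, k < 0 → P k = 0) (hQ0 : Q 0 = 1) (hQneg : ∀ k : ℤ, k < 0 → Q k = 0)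
    (hQrec : ∀ n : ℕ, 1 ≤ n → (n : K) • Q n = ∑ r ∈ Icc 1 n, α r • (a r * Q (n - r)))
    (haP : ∀ r : ℕ, 1 ≤ r → ∀ j : ℤ, a r * P j = P j * a r + c r • P (j - r))
    (hαc : ∀ r : ℕ, 1 ≤ r → α r * c r = 1) (m n : ℕ) :
    Q m * P n = ∑ k ∈ range (n + 1), P (n - k) * Q (m - k) := by
  induction m using Nat.strong_induction_on generalizing n with
  | _ m ih =>
  rcases Nat.eq_zero_or_pos m with rfl | hm
  · rw [sum_range_succ', sum_eq_zero fun k _ => by rw [hQneg _ (by omega), mul_zero]]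
    simp [hQ0]
  set f : ℕ → A := fun k => P (n - k) * Q (m - k)
  have hterm : ∀ r ∈ Icc 1 m, α r • (a r * Q (m - r) * P n) =
      ∑ k ∈ range (n + 1), P (n - k) * (α r • (a r * Q (m - k - r)))
        + ∑ k ∈ range (n + 1), f (k + r) := by
    intro r hr
    obtain ⟨hr1, hrm⟩ := mem_Icc.mp hr
    have := ih (m - r) (by omega) n
    push_cast [hrm] at this
    rw [mul_assoc, this, mul_sum, smul_sum, ← sum_add_distrib]
    refine sum_congr rfl fun k _ => ?_
    rw [← mul_assoc, haP r hr1, add_mul, smul_add, smul_mul_assoc, smul_smul, hαc r hr1, one_smul]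
    simp only [f, mul_smul_comm, mul_assoc]
    push_cast
    rw [sub_right_comm (m : ℤ) r k, ← sub_sub (n : ℤ) k r, ← sub_sub (m : ℤ) k r]
  have hinner : ∀ k ∈ range (n + 1),
      ∑ r ∈ Icc 1 m, P (n - k) * (α r • (a r * Q (m - k - r))) = ((m : K) - k) • f k := by
    intro k _
    rw [← mul_sum, ← smul_eq_sum_Icc_of_le hQneg hQrec (by omega), mul_smul_comm]
    push_cast; rfl
  have hm0 : (m : K) ≠ 0 := by exact_mod_cast hm.ne'
  refine smul_right_injective A hm0 ?_
  calc (m : K) • (Q m * P n) = ∑ r ∈ Icc 1 m, α r • (a r * Q (m - r) * P n) := by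
        rw [← smul_mul_assoc, hQrec m hm, sum_mul]
        simp only [smul_mul_assoc]
    _ = ∑ k ∈ range (n + 1), (((m : K) - k) • f k + k • f k) := by
        rw [sum_congr rfl hterm, sum_add_distrib, sum_comm, sum_congr rfl hinner, sum_add_distrib,
          sum_Icc_sum_range_add_eq_sum_nsmul]
        · intro j hj; simp only [f]; rw [hQneg _ (by omega), mul_zero]
        · intro j hj; simp only [f]; rw [hPneg _ (by omega), zero_mul]
    _ = (m : K) • ∑ k ∈ range (n + 1), f k := by
        rw [smul_sum]
        refine sum_congr rfl fun k _ => ?_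
        rw [← Nat.cast_smul_eq_nsmul K, ← add_smul, sub_add_cancel]

end

theorem heisenberg_Q1P_adjacent_nodes_general
    {A : Type*} [Ring A] [Algebra (RatFunc ℚ) A]
    (b a : ℕ → A)
    (P Q1 : ℤ → A)
    (hP0 : P 0 = 1)
    (hPneg : ∀ k : ℤ, k < 0 → P k = 0)
    (hPrec : ∀ n : ℕ, 1 ≤ n →
      (n : RatFunc ℚ) • P n =
        ∑ m ∈ Finset.Icc 1 n, ((m : RatFunc ℚ) / qint m) • (b m * P ((n : ℤ) - m)))
    (hQ10 : Q1 0 = 1)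
    (hQ1neg : ∀ k : ℤ, k < 0 → Q1 k = 0)
    (hQ1rec : ∀ n : ℕ, 1 ≤ n →
      (n : RatFunc ℚ) • Q1 n =
        ∑ m ∈ Finset.Icc 1 n,
          ((-1 : RatFunc ℚ) ^ (m + 1) * (m : RatFunc ℚ) / qint m) • (a m * Q1 ((n : ℤ) - m)))
    (hcomm : ∀ m m' : ℕ, 1 ≤ m → 1 ≤ m' →
      a m * b m' - b m' * a m =
        if m = m' then
          (((-1 : RatFunc ℚ) ^ (m + 1) * qint m ^ 2 / (m : RatFunc ℚ)) • (1 : A))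
        else 0)
    (m n : ℕ) :
    Q1 m * P n =
      ∑ k ∈ Finset.range (min m n + 1), P ((n : ℤ) - k) * Q1 ((m : ℤ) - k) := by
  have hαc : ∀ r : ℕ, 1 ≤ r → (-1 : RatFunc ℚ) ^ (r + 1) * r / qint r *
      (r / qint r * ((-1) ^ (r + 1) * qint r ^ 2 / r) / r) = 1 := by
    intro r hr
    have hq := qint_ne_zero (n := r) (by omega)
    have hr0 : (r : RatFunc ℚ) ≠ 0 := by exact_mod_cast (show r ≠ 0 by omega)
    field_simp
    rw [pow_right_comm, neg_one_sq, one_pow]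
  rw [mul_eq_sum_range_of_mul_eq_mul_add_smul hPneg hQ10 hQ1neg hQ1rec
    (fun r hr => mul_eq_mul_add_smul_of_sub_eq_ite hP0 hPneg hPrec hr (hcomm r · hr ·)) hαc]
  refine (sum_subset (range_subset_range.mpr (by omega)) fun k hk hk' => ?_).symm
  simp only [mem_range] at hk hk'
  rw [hQ1neg _ (by omega), mul_zero]

/-- The adjacent-node mixed relation:
`Q^{(1^m)} P^{(n)} = ∑_{k=0}^{min(m,n)} P^{(n-k)} Q^{(1^{m-k})}`. -/
theorem heisenberg_Q1P_adjacent_nodes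
    {A : Type*} [Ring A] [Algebra (RatFunc ℚ) A]
    (b a : ℕ → A)
    (hb : ∀ m m' : ℕ, Commute (b m) (b m'))
    (ha : ∀ m m' : ℕ, Commute (a m) (a m'))
    (P Q1 : ℤ → A)
    (hP0 : P 0 = 1)
    (hPneg : ∀ k : ℤ, k < 0 → P k = 0)
    (hPrec : ∀ n : ℕ, 1 ≤ n →
      (n : RatFunc ℚ) • P n =
        ∑ m ∈ Finset.Icc 1 n, ((m : RatFunc ℚ) / qint m) • (b m * P ((n : ℤ) - m)))
    (hQ10 : Q1 0 = 1)
    (hQ1neg : ∀ k : ℤ, k < 0 → Q1 k = 0)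
    (hQ1rec : ∀ n : ℕ, 1 ≤ n →
      (n : RatFunc ℚ) • Q1 n =
        ∑ m ∈ Finset.Icc 1 n,
          ((-1 : RatFunc ℚ) ^ (m + 1) * (m : RatFunc ℚ) / qint m) • (a m * Q1 ((n : ℤ) - m)))
    (hcomm : ∀ m m' : ℕ, 1 ≤ m → 1 ≤ m' →
      a m * b m' - b m' * a m =
        if m = m' then
          (((-1 : RatFunc ℚ) ^ (m + 1) * qint m ^ 2 / (m : RatFunc ℚ)) • (1 : A))
        else 0)
    (m n : ℕ) :
    Q1 m * P n =
      ∑ k ∈ Finset.range (min m n + 1), P ((n : ℤ) - k) * Q1 ((m : ℤ) - k) :=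
  heisenberg_Q1P_adjacent_nodes_general b a P Q1 hP0 hPneg hPrec hQ10 hQ1neg hQ1rec hcomm m n
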